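/- Let T ∈ (0,∞), d ∈ ℕ, σ ∈ ℝ^{d×d}, let b, 𝔟 ∈ C^{0,2}([0,T]×ℝ^d, ℝ^d) both have bounded first and second order partial derivatives with respect to the x-variables, and let U : [0,T] → ℝ^d be a continuous path. Let R^{t,x}, 𝓡^{t,x} : [0,t] → ℝ^d satisfy R^{t,x}_s = x + ∫_0^s b(t−r, R^{t,x}_r) dr + σ U_s and 𝓡^{t,x}_s = x + ∫_0^s 𝔟(t−r, 𝓡^{t,x}_r) dr + σ U_s for all t ∈ [0,T], s ∈ [0,t], x ∈ ℝ^d. Then for all i ∈ {1,…,d}, t ∈ [0,T], x ∈ ℝ^d: sup_{s∈[0,t]} ‖∂𝓡^{t,x}_s/∂x_i − ∂R^{t,x}_s/∂x_i‖_{ℝ^d} ≤ T · sup_{s∈[0,t]} ‖D_x 𝔟(t−s, 𝓡^{t,x}_s) − D_x b(t−s, R^{t,x}_s)‖_{L(ℝ^d,ℝ^d)} · exp(T · [sup_{(r,y)∈[0,T]×ℝ^d} ‖D_x 𝔟(r,y)‖_{L(ℝ^d,ℝ^d)} + sup_{(r,y)∈[0,T]×ℝ^d} ‖D_x b(r,y)‖_{L(ℝ^d,ℝ^d)}]).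 -/

import Mathlib

open MeasureTheory Set Filter

noncomputable section

/-- `IsC02 T b` expresses that `b : [0,T] × ℝ^d → F` is of class `C^{0,2}`: it is jointly
continuous, twice continuously differentiable in the space variable, and the first and
second space derivatives are jointly continuous on `[0,T] × ℝ^d`. -/
def IsC02 {d : ℕ} {F : Type*} [NormedAddCommGroup F] [NormedSpace ℝ F] (T : ℝ)
    (b : ℝ → EuclideanSpace ℝ (Fin d) → F) : Prop :=
  ContinuousOn (fun q : ℝ × EuclideanSpace ℝ (Fin d) => b q.1 q.2)
    (Set.Icc 0 T ×ˢ Set.univ) ∧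
  (∀ t ∈ Set.Icc (0:ℝ) T, ContDiff ℝ 2 (b t)) ∧
  ContinuousOn (fun q : ℝ × EuclideanSpace ℝ (Fin d) => fderiv ℝ (b q.1) q.2)
    (Set.Icc 0 T ×ˢ Set.univ) ∧
  ContinuousOn (fun q : ℝ × EuclideanSpace ℝ (Fin d) => fderiv ℝ (fderiv ℝ (b q.1)) q.2)
    (Set.Icc 0 T ×ˢ Set.univ)

section AuxiliaryLemmas
open intervalIntegral

variable {E : Type*} [NormedAddCommGroup E] [NormedSpace ℝ E] [CompleteSpace E]

theorem primitive_hasDerivAt {g : ℝ → E} (hg : Continuous g) (s : ℝ) :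
    HasDerivAt (fun u => ∫ r in (0:ℝ)..u, g r) (g s) s :=
  integral_hasDerivAt_right (hg.intervalIntegrable _ _)
    (hg.stronglyMeasurable.stronglyMeasurableAtFilter) hg.continuousAt

theorem primitive_continuous {g : ℝ → E} (hg : Continuous g) :
    Continuous (fun u => ∫ r in (0:ℝ)..u, g r) := by
  have : Differentiable ℝ (fun u => ∫ r in (0:ℝ)..u, g r) :=
    fun s => (primitive_hasDerivAt hg s).differentiableAt
  exact this.continuous

/-- Grönwall for integral equations with continuous integrand. -/
theorem gronwall_integral{g : ℝ → E} (hg : Continuous g) (v : E)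
    {K ε t : ℝ}
    (hb : ∀ s ∈ Ico (0:ℝ) t, ‖g s‖ ≤ K * ‖v + ∫ r in (0:ℝ)..s, g r‖ + ε) :
    ∀ s ∈ Icc (0:ℝ) t, ‖v + ∫ r in (0:ℝ)..s, g r‖ ≤ gronwallBound ‖v‖ K ε s := by
  intro s hs
  have := norm_le_gronwallBound_of_norm_deriv_right_le
    (f := fun u => v + ∫ r in (0:ℝ)..u, g r) (f' := g) (a := 0) (b := t) (δ := ‖v‖)
    (Continuous.continuousOn (by exact (continuous_const.add (primitive_continuous hg))))
    (fun u _ => ((primitive_hasDerivAt hg u).const_add v).hasDerivWithinAt)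
    (by simp) hb s hs
  simpa using this

theorem exp_sub_one_le' {a : ℝ} (ha : 0 ≤ a) : Real.exp a - 1 ≤ a * Real.exp a := by
  have h1 := Real.add_one_le_exp (-a)
  have h2 := Real.exp_pos a
  have h3 : Real.exp (-a) * Real.exp a = 1 := by
    rw [← Real.exp_add]; simp
  nlinarith

theorem gronwallBound_le' {K ε s T : ℝ} (hK : 0 ≤ K) (hε : 0 ≤ ε) (hs : 0 ≤ s) (hsT : s ≤ T) :
    gronwallBound 0 K ε s ≤ ε * (T * Real.exp (K * T)) := by
  have hT : 0 ≤ T := le_trans hs hsT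
  have hx : s * Real.exp (K * s) ≤ T * Real.exp (K * T) := by
    have : Real.exp (K * s) ≤ Real.exp (K * T) :=
      Real.exp_le_exp.2 (mul_le_mul_of_nonneg_left hsT hK)
    nlinarith [Real.exp_pos (K * s)]
  rcases eq_or_ne K 0 with h0 | h0
  · subst h0
    have : gronwallBound 0 0 ε s = ε * s := by rw [gronwallBound_K0]; simp
    rw [this, zero_mul, Real.exp_zero, mul_one]
    exact mul_le_mul_of_nonneg_left hsT hε
  · have hKpos : 0 < K := lt_of_le_of_ne hK (Ne.symm h0)
    have hgb : gronwallBound 0 K ε s = ε / K * (Real.exp (K * s) - 1) := by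
      rw [gronwallBound_of_K_ne_0 h0]; ring
    rw [hgb]
    have h1 : Real.exp (K * s) - 1 ≤ (K * s) * Real.exp (K * s) :=
      exp_sub_one_le' (mul_nonneg hK hs)
    have : ε / K * (Real.exp (K * s) - 1) ≤ ε * (s * Real.exp (K * s)) := by
      rw [div_mul_eq_mul_div, div_le_iff₀ hKpos]
      nlinarith
    calc ε / K * (Real.exp (K * s) - 1) ≤ ε * (s * Real.exp (K * s)) := this
      _ ≤ ε * (T * Real.exp (K * T)) := mul_le_mul_of_nonneg_left hx hε

variable {F : Type*} [NormedAddCommGroup F] [NormedSpace ℝ F]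

theorem lip_of_fderiv_bound {f : E → F} (hf : Differentiable ℝ f) {K : ℝ}
    (hK : ∀ z, ‖fderiv ℝ f z‖ ≤ K) (z w : E) : ‖f z - f w‖ ≤ K * ‖z - w‖ :=
  Convex.norm_image_sub_le_of_norm_fderiv_le (fun u _ => hf u) (fun u _ => hK u)
    convex_univ (mem_univ w) (mem_univ z)

theorem taylor_bound {f : E → F} (hf : ContDiff ℝ 2 f) {M : ℝ}
    (hM : ∀ z, ‖fderiv ℝ (fderiv ℝ f) z‖ ≤ M) (w z : E) :
    ‖f z - f w - fderiv ℝ f w (z - w)‖ ≤ M * ‖z - w‖ ^ 2 := by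
  have hf1 : ContDiff ℝ 1 (fderiv ℝ f) := hf.fderiv_right (by norm_num)
  have hlip : ∀ u, ‖fderiv ℝ f u - fderiv ℝ f w‖ ≤ M * ‖u - w‖ :=
    fun u => lip_of_fderiv_bound (hf1.differentiable (by norm_num)) hM u w
  have := Convex.norm_image_sub_le_of_norm_fderiv_le' (𝕜 := ℝ)
    (f := f) (s := Metric.closedBall w ‖z - w‖) (φ := fderiv ℝ f w) (C := M * ‖z - w‖)
    (fun u _ => (hf.differentiable (by norm_num)).differentiableAt)
    (fun u hu => by
      refine le_trans (hlip u) (mul_le_mul_of_nonneg_left ?_ ?_)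
      · simpa [dist_eq_norm] using hu
      · exact le_trans (by positivity) (hM w))
    (convex_closedBall _ _) (Metric.mem_closedBall_self (norm_nonneg _))
    (show z ∈ Metric.closedBall w ‖z - w‖ by simp [Metric.mem_closedBall, dist_eq_norm])
  calc ‖f z - f w - (fderiv ℝ f w) (z - w)‖ ≤ M * ‖z - w‖ * ‖z - w‖ := this
    _ = M * ‖z - w‖ ^ 2 := by ring

set_option maxHeartbeats 1000000 in
theorem flow_fderiv {d : ℕ} {T : ℝ}
    (c : ℝ → EuclideanSpace ℝ (Fin d) → EuclideanSpace ℝ (Fin d))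
    (hc1 : ContinuousOn (fun q : ℝ × EuclideanSpace ℝ (Fin d) => c q.1 q.2)
      (Set.Icc 0 T ×ˢ Set.univ))
    (hc2 : ∀ τ ∈ Set.Icc (0:ℝ) T, ContDiff ℝ 2 (c τ))
    (hcd : ContinuousOn (fun q : ℝ × EuclideanSpace ℝ (Fin d) => fderiv ℝ (c q.1) q.2)
      (Set.Icc 0 T ×ˢ Set.univ))
    {K M : ℝ}
    (hK : ∀ τ ∈ Set.Icc (0:ℝ) T, ∀ z, ‖fderiv ℝ (c τ) z‖ ≤ K)
    (hM : ∀ τ ∈ Set.Icc (0:ℝ) T, ∀ z, ‖fderiv ℝ (fderiv ℝ (c τ)) z‖ ≤ M)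
    {t : ℝ} (ht : t ∈ Set.Icc (0:ℝ) T) (x : EuclideanSpace ℝ (Fin d))
    (X : EuclideanSpace ℝ (Fin d) → ℝ → EuclideanSpace ℝ (Fin d))
    (V : ℝ → EuclideanSpace ℝ (Fin d))
    (hXc : ∀ y, ContinuousOn (X y) (Set.Icc 0 t))
    (hXeq : ∀ y, ∀ s ∈ Set.Icc (0:ℝ) t,
      X y s = y + (∫ r in (0:ℝ)..s, c (t - r) (X y r)) + V s) :
    ∃ L : ℝ → EuclideanSpace ℝ (Fin d) →L[ℝ] EuclideanSpace ℝ (Fin d),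
      (∀ s ∈ Set.Icc (0:ℝ) t, HasFDerivAt (fun y => X y s) (L s) x) ∧
      (∀ v, ContinuousOn (fun s => L s v) (Set.Icc 0 t)) ∧
      (∀ v, ∀ s ∈ Set.Icc (0:ℝ) t,
        L s v = v + ∫ r in (0:ℝ)..s, (fderiv ℝ (c (t - r)) (X x r)) (L r v)) ∧
      (∀ v, ∀ s ∈ Set.Icc (0:ℝ) t, ‖L s v‖ ≤ ‖v‖ * Real.exp (K * T)) := by
  classical
  obtain ⟨ht0, htT⟩ := ht
  -- the projection onto [0, t]
  set π : ℝ → ℝ := fun r => (projIcc 0 t ht0 r : ℝ) with hπ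
  have hπcont : Continuous π := continuous_subtype_val.comp (continuous_projIcc)
  have hπmem : ∀ r, π r ∈ Icc (0:ℝ) t := fun r => (projIcc 0 t ht0 r).2
  have hπeq : ∀ r ∈ Icc (0:ℝ) t, π r = r := by
    intro r hr
    simp only [hπ, projIcc_of_mem ht0 hr]
  have htmem : ∀ r, t - π r ∈ Icc (0:ℝ) T := by
    intro r
    have h := hπmem r
    exact ⟨by linarith [h.2], by linarith [h.1]⟩
  have hK0 : (0:ℝ) ≤ K := le_trans (norm_nonneg _) (hK t ⟨ht0, htT⟩ x)
  have hM0 : (0:ℝ) ≤ M := by have := hM t ⟨ht0, htT⟩ x; exact le_trans (by positivity) this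
  -- extended flow and integrand
  set Xe : EuclideanSpace ℝ (Fin d) → ℝ → EuclideanSpace ℝ (Fin d) := fun y r => X y (π r) with hXe
  have hXecont : ∀ y, Continuous (Xe y) := by
    intro y
    exact (hXc y).comp_continuous hπcont hπmem
  -- Lipschitz property of c τ
  have hclip : ∀ τ ∈ Icc (0:ℝ) T, ∀ z w : EuclideanSpace ℝ (Fin d), ‖c τ z - c τ w‖ ≤ K * ‖z - w‖ := by
    intro τ hτ z w
    exact lip_of_fderiv_bound ((hc2 τ hτ).differentiable (by norm_num)) (hK τ hτ) z w
  set q : EuclideanSpace ℝ (Fin d) → ℝ → EuclideanSpace ℝ (Fin d) := fun y r => c (t - π r) (Xe y r) with hq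
  have hqcont : ∀ y, Continuous (q y) := by
    intro y
    have hmap : ∀ r, ((t - π r, Xe y r) : ℝ × EuclideanSpace ℝ (Fin d)) ∈ Icc (0:ℝ) T ×ˢ (univ : Set (EuclideanSpace ℝ (Fin d))) :=
      fun r => ⟨htmem r, mem_univ _⟩
    exact hc1.comp_continuous (by fun_prop) hmap
  have hqe : ∀ y, ∀ r ∈ Icc (0:ℝ) t, q y r = c (t - r) (X y r) := by
    intro y r hr
    simp only [hq, hXe, hπeq r hr]
  set A : ℝ → EuclideanSpace ℝ (Fin d) →L[ℝ] EuclideanSpace ℝ (Fin d) := fun r => fderiv ℝ (c (t - π r)) (Xe x r) with hA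
  have hAcont : Continuous A := by
    have hmap : ∀ r, ((t - π r, Xe x r) : ℝ × EuclideanSpace ℝ (Fin d)) ∈ Icc (0:ℝ) T ×ˢ (univ : Set (EuclideanSpace ℝ (Fin d))) :=
      fun r => ⟨htmem r, mem_univ _⟩
    exact hcd.comp_continuous (by fun_prop) hmap
  have hAK : ∀ r, ‖A r‖ ≤ K := fun r => hK _ (htmem r) _
  have hAe : ∀ r ∈ Icc (0:ℝ) t, A r = fderiv ℝ (c (t - r)) (X x r) := by
    intro r hr
    simp only [hA, hXe, hπeq r hr]
  -- rewritten flow equation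
  have hXeq' : ∀ y, ∀ s ∈ Icc (0:ℝ) t,
      X y s = y + (∫ r in (0:ℝ)..s, q y r) + V s := by
    intro y s hs
    rw [hXeq y s hs]
    congr 1
    congr 1
    apply intervalIntegral.integral_congr
    intro r hr
    rw [uIcc_of_le hs.1] at hr
    exact (hqe y r ⟨hr.1, le_trans hr.2 hs.2⟩).symm
  have hdiff : ∀ y, ∀ s ∈ Icc (0:ℝ) t,
      X y s - X x s = (y - x) + ∫ r in (0:ℝ)..s, (q y r - q x r) := by
    intro y s hs
    rw [hXeq' y s hs, hXeq' x s hs,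
      intervalIntegral.integral_sub ((hqcont y).intervalIntegrable _ _)
        ((hqcont x).intervalIntegrable _ _)]
    abel
  -- Lipschitz dependence of the flow on the initial condition
  have hflowlip : ∀ y, ∀ s ∈ Icc (0:ℝ) t, ‖X y s - X x s‖ ≤ ‖y - x‖ * Real.exp (K * T) := by
    intro y s hs
    have hgc : Continuous (fun r => q y r - q x r) := (hqcont y).sub (hqcont x)
    have hb : ∀ r ∈ Ico (0:ℝ) t, ‖q y r - q x r‖ ≤
        K * ‖(y - x) + ∫ u in (0:ℝ)..r, (q y u - q x u)‖ + 0 := by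
      intro r hr
      have hr' : r ∈ Icc (0:ℝ) t := ⟨hr.1, le_of_lt hr.2⟩
      rw [← hdiff y r hr', add_zero, hqe y r hr', hqe x r hr']
      exact hclip (t - r) ⟨by linarith [hr'.2], by linarith [hr'.1]⟩ _ _
    have := gronwall_integral hgc (y - x) hb s hs
    rw [← hdiff y s hs, gronwallBound_ε0] at this
    refine le_trans this (mul_le_mul_of_nonneg_left ?_ (norm_nonneg _))
    exact Real.exp_le_exp.2 (by nlinarith [hs.1, hs.2])
  -- the Picard operator on the space of continuous maps on [0, t]
  haveI : Nonempty (Icc (0:ℝ) t) := ⟨⟨0, left_mem_Icc.2 ht0⟩⟩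
  set Φ : EuclideanSpace ℝ (Fin d) → C(Icc (0:ℝ) t, EuclideanSpace ℝ (Fin d)) →
      C(Icc (0:ℝ) t, EuclideanSpace ℝ (Fin d)) := fun v J =>
    ⟨fun s => v + ∫ r in (0:ℝ)..(s:ℝ), A r (J (projIcc 0 t ht0 r)),
      (continuous_const.add (primitive_continuous
          (hAcont.clm_apply (J.continuous.comp continuous_projIcc)))).comp
        continuous_subtype_val⟩ with hΦ
  have hΦapp : ∀ v J (s : Icc (0:ℝ) t), Φ v J s =
      v + ∫ r in (0:ℝ)..(s:ℝ), A r (J (projIcc 0 t ht0 r)) := fun v J s => rfl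
  -- the basic iterate estimate
  have hGcont : ∀ (J : C(Icc (0:ℝ) t, EuclideanSpace ℝ (Fin d))),
      Continuous (fun r => A r (J (projIcc 0 t ht0 r))) := fun J =>
    hAcont.clm_apply (J.continuous.comp continuous_projIcc)
  have hiter : ∀ v n (J J' : C(Icc (0:ℝ) t, EuclideanSpace ℝ (Fin d))) (s : Icc (0:ℝ) t),
      ‖(Φ v)^[n] J s - (Φ v)^[n] J' s‖ ≤ (K * s)^n / n.factorial * ‖J - J'‖ := by
    intro v n
    induction n with
    | zero =>
      intro J J' s
      simpa using ContinuousMap.norm_coe_le_norm (J - J') s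
    | succ n ih =>
      intro J J' s
      rw [Function.iterate_succ_apply', Function.iterate_succ_apply']
      set P := (Φ v)^[n] J with hP
      set P' := (Φ v)^[n] J' with hP'
      have heq : Φ v P s - Φ v P' s =
          ∫ r in (0:ℝ)..(s:ℝ), A r (P (projIcc 0 t ht0 r) - P' (projIcc 0 t ht0 r)) := by
        rw [hΦapp, hΦapp]
        simp only [map_sub]
        rw [intervalIntegral.integral_sub ((hGcont P).intervalIntegrable _ _)
          ((hGcont P').intervalIntegrable _ _)]
        abel
      rw [heq]
      have hs0 : (0:ℝ) ≤ (s:ℝ) := s.2.1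
      calc ‖∫ r in (0:ℝ)..(s:ℝ), A r (P (projIcc 0 t ht0 r) - P' (projIcc 0 t ht0 r))‖
          ≤ ∫ r in (0:ℝ)..(s:ℝ), ‖A r (P (projIcc 0 t ht0 r) - P' (projIcc 0 t ht0 r))‖ :=
            intervalIntegral.norm_integral_le_integral_norm hs0
        _ ≤ ∫ r in (0:ℝ)..(s:ℝ), K * ((K * r)^n / n.factorial * ‖J - J'‖) := by
            apply intervalIntegral.integral_mono_on hs0
            · exact ((hAcont.clm_apply (((P.continuous.comp continuous_projIcc)).sub
                ((P'.continuous.comp continuous_projIcc)))).norm).intervalIntegrable _ _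
            · exact (Continuous.intervalIntegrable (by fun_prop) _ _)
            · intro r hr
              have hrt : r ∈ Icc (0:ℝ) t := ⟨hr.1, le_trans hr.2 s.2.2⟩
              have h1 : ‖A r (P (projIcc 0 t ht0 r) - P' (projIcc 0 t ht0 r))‖ ≤
                  K * ‖P (projIcc 0 t ht0 r) - P' (projIcc 0 t ht0 r)‖ :=
                le_trans (ContinuousLinearMap.le_opNorm _ _)
                  (mul_le_mul_of_nonneg_right (hAK r) (norm_nonneg _))
              refine le_trans h1 (mul_le_mul_of_nonneg_left ?_ hK0)
              have h2 := ih J J' (projIcc 0 t ht0 r)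
              rwa [show ((projIcc 0 t ht0 r : ℝ)) = r from by
                rw [projIcc_of_mem ht0 hrt]] at h2
        _ = (K * s)^(n+1) / (n+1).factorial * ‖J - J'‖ := by
            have : (fun r => K * ((K * r)^n / n.factorial * ‖J - J'‖)) =
                (fun r => (K^(n+1) * ‖J - J'‖ / n.factorial) * r^n) := by
              funext r
              rw [mul_pow]
              ring
            rw [this, intervalIntegral.integral_const_mul, integral_pow]
            rw [Nat.factorial_succ, mul_pow]
            push_cast
            have hn : (n.factorial : ℝ) ≠ 0 := Nat.cast_ne_zero.2 (Nat.factorial_ne_zero n)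
            field_simp
            ring
  -- a contracting iterate
  obtain ⟨n, hn⟩ : ∃ n, (K * t)^n / n.factorial < 1 := by
    have h := FloorSemiring.tendsto_pow_div_factorial_atTop (K := ℝ) (K * t)
    exact (h.eventually (gt_mem_nhds one_pos)).exists
  have hKt0 : (0:ℝ) ≤ (K * t)^n / n.factorial :=
    div_nonneg (pow_nonneg (mul_nonneg hK0 ht0) n) (Nat.cast_nonneg _)
  have hcontr : ∀ v, ContractingWith ((K * t)^n / n.factorial).toNNReal ((Φ v)^[n]) := by
    intro v
    constructor
    · rwa [← NNReal.coe_lt_coe, Real.coe_toNNReal _ hKt0, NNReal.coe_one]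
    · apply LipschitzWith.of_dist_le_mul
      intro J J'
      rw [Real.coe_toNNReal _ hKt0]
      rw [ContinuousMap.dist_le (mul_nonneg hKt0 dist_nonneg)]
      intro s
      rw [dist_eq_norm]
      refine le_trans (hiter v n J J' s) ?_
      rw [← dist_eq_norm]
      refine mul_le_mul_of_nonneg_right ?_ dist_nonneg
      have : (K * (s:ℝ))^n ≤ (K * t)^n :=
        pow_le_pow_left₀ (mul_nonneg hK0 s.2.1)
          (mul_le_mul_of_nonneg_left s.2.2 hK0) n
      exact div_le_div_of_nonneg_right this (by positivity) -- may need name fix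
  -- the fixed point (the derivative flow), for each direction v
  set Jf : EuclideanSpace ℝ (Fin d) → C(Icc (0:ℝ) t, EuclideanSpace ℝ (Fin d)) :=
    fun v => (hcontr v).fixedPoint ((Φ v)^[n]) with hJf
  have hfixv : ∀ v, Φ v (Jf v) = Jf v := fun v =>
    ContractingWith.isFixedPt_fixedPoint_iterate (hcontr v)
  have huniq : ∀ v (P : C(Icc (0:ℝ) t, EuclideanSpace ℝ (Fin d))), Φ v P = P → P = Jf v := by
    intro v P hP
    exact (hcontr v).fixedPoint_unique (Function.IsFixedPt.iterate hP n)
  have hJeq : ∀ v (s : Icc (0:ℝ) t),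
      Jf v s = v + ∫ r in (0:ℝ)..(s:ℝ), A r (Jf v (projIcc 0 t ht0 r)) := by
    intro v s
    conv_lhs => rw [← hfixv v]
    rfl
  -- J is additive / homogeneous
  have hJsmuladd : ∀ (a : ℝ) v w, Jf (a • v + w) = a • Jf v + Jf w := by
    intro a v w
    refine (huniq _ _ ?_).symm
    refine ContinuousMap.ext fun s => ?_
    rw [hΦapp]
    have hrw : ∀ r, A r ((a • Jf v + Jf w) (projIcc 0 t ht0 r)) =
        a • A r (Jf v (projIcc 0 t ht0 r)) + A r (Jf w (projIcc 0 t ht0 r)) := by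
      intro r
      simp [map_add, _root_.map_smul]
    simp only [hrw]
    rw [intervalIntegral.integral_add (show IntervalIntegrable (fun r => a • A r (Jf v (projIcc 0 t ht0 r))) volume _ _ from
      ((hGcont (Jf v)).const_smul a).intervalIntegrable _ _)
      ((hGcont (Jf w)).intervalIntegrable _ _), intervalIntegral.integral_smul]
    have h1 := hJeq v s
    have h2 := hJeq w s
    simp only [ContinuousMap.add_apply, ContinuousMap.smul_apply, h1, h2]
    module
  have hJadd : ∀ v w, Jf (v + w) = Jf v + Jf w := by
    intro v w
    have := hJsmuladd 1 v w
    simpa using this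
  have hJzero : Jf 0 = 0 := by
    refine (huniq 0 0 ?_).symm
    refine ContinuousMap.ext fun s => ?_
    rw [hΦapp]
    simp
  have hJsmul : ∀ (a : ℝ) v, Jf (a • v) = a • Jf v := by
    intro a v
    have := hJsmuladd a v 0
    simpa [hJzero] using this
  -- the candidate derivative as a continuous linear map
  set L : ℝ → EuclideanSpace ℝ (Fin d) →L[ℝ] EuclideanSpace ℝ (Fin d) := fun s =>
    LinearMap.toContinuousLinearMap
      { toFun := fun v => Jf v (projIcc 0 t ht0 s)
        map_add' := fun v w => by simp only [hJadd, ContinuousMap.add_apply]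
        map_smul' := fun a v => by
          simp only [RingHom.id_apply, hJsmul, ContinuousMap.smul_apply] } with hL
  have hLapp : ∀ s v, L s v = Jf v (projIcc 0 t ht0 s) := fun s v => rfl
  have hLcont : ∀ v, Continuous (fun s => L s v) := by
    intro v
    simp only [hLapp]
    exact (Jf v).continuous.comp continuous_projIcc
  -- the integral equation for L
  have hLeq : ∀ v, ∀ s ∈ Icc (0:ℝ) t,
      L s v = v + ∫ r in (0:ℝ)..s, (fderiv ℝ (c (t - r)) (X x r)) (L r v) := by
    intro v s hs
    rw [hLapp, projIcc_of_mem ht0 hs, hJeq v ⟨s, hs⟩]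
    congr 1
    apply intervalIntegral.integral_congr
    intro r hr
    rw [uIcc_of_le hs.1] at hr
    have hrt : r ∈ Icc (0:ℝ) t := ⟨hr.1, le_trans hr.2 hs.2⟩
    show (A r) ((Jf v) (projIcc 0 t ht0 r)) = (fderiv ℝ (c (t - r)) (X x r)) (L r v)
    rw [hAe r hrt, hLapp]
  -- the exponential bound for L
  have hLbound : ∀ v, ∀ s ∈ Icc (0:ℝ) t, ‖L s v‖ ≤ ‖v‖ * Real.exp (K * T) := by
    intro v s hs
    have hgc : Continuous (fun r => A r (Jf v (projIcc 0 t ht0 r))) := hGcont (Jf v)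
    have hFe : ∀ u ∈ Icc (0:ℝ) t,
        v + (∫ r in (0:ℝ)..u, A r (Jf v (projIcc 0 t ht0 r))) = Jf v (projIcc 0 t ht0 u) := by
      intro u hu
      rw [projIcc_of_mem ht0 hu, hJeq v ⟨u, hu⟩]
    have hb : ∀ u ∈ Ico (0:ℝ) t, ‖A u (Jf v (projIcc 0 t ht0 u))‖ ≤
        K * ‖v + ∫ r in (0:ℝ)..u, A r (Jf v (projIcc 0 t ht0 r))‖ + 0 := by
      intro u hu
      rw [add_zero, hFe u ⟨hu.1, le_of_lt hu.2⟩]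
      exact le_trans (ContinuousLinearMap.le_opNorm _ _)
        (mul_le_mul_of_nonneg_right (hAK u) (norm_nonneg _))
    have := gronwall_integral hgc v hb s hs
    rw [hFe s hs, gronwallBound_ε0] at this
    rw [hLapp]
    refine le_trans this (mul_le_mul_of_nonneg_left ?_ (norm_nonneg _))
    exact Real.exp_le_exp.2 (by nlinarith [hs.1, hs.2])
  -- quadratic remainder estimate
  have hkey : ∀ s ∈ Icc (0:ℝ) t, ∀ y : EuclideanSpace ℝ (Fin d),
      ‖X y s - X x s - L s (y - x)‖ ≤
        (M * Real.exp (K * T)^2 * (T * Real.exp (K * T))) * ‖y - x‖^2 := by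
    intro s hs y
    set g : ℝ → EuclideanSpace ℝ (Fin d) := fun r =>
      (q y r - q x r) - A r (Jf (y - x) (projIcc 0 t ht0 r)) with hg
    have hgc : Continuous g := ((hqcont y).sub (hqcont x)).sub (hGcont (Jf (y - x)))
    have hFeq : ∀ u (hu : u ∈ Icc (0:ℝ) t),
        (0 : EuclideanSpace ℝ (Fin d)) + (∫ r in (0:ℝ)..u, g r) =
          X y u - X x u - L u (y - x) := by
      intro u hu
      have e1 : (∫ r in (0:ℝ)..u, (q y r - q x r)) = X y u - X x u - (y - x) := by
        rw [hdiff y u hu]; abel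
      have e2 : L u (y - x) = (y - x) +
          ∫ r in (0:ℝ)..u, A r (Jf (y - x) (projIcc 0 t ht0 r)) := by
        rw [hLapp, projIcc_of_mem ht0 hu]
        exact hJeq (y - x) ⟨u, hu⟩
      rw [zero_add, hg]
      beta_reduce
      rw [intervalIntegral.integral_sub
        (show IntervalIntegrable (fun r => q y r - q x r) volume _ _ from
          ((hqcont y).sub (hqcont x)).intervalIntegrable _ _)
        ((hGcont (Jf (y - x))).intervalIntegrable _ _), e1, e2]
      abel
    set ε : ℝ := M * (‖y - x‖ * Real.exp (K * T))^2 with hε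
    have hε0 : 0 ≤ ε := by positivity
    have hb : ∀ u ∈ Ico (0:ℝ) t, ‖g u‖ ≤
        K * ‖(0 : EuclideanSpace ℝ (Fin d)) + ∫ r in (0:ℝ)..u, g r‖ + ε := by
      intro u hu
      have hu' : u ∈ Icc (0:ℝ) t := ⟨hu.1, le_of_lt hu.2⟩
      have htu : t - u ∈ Icc (0:ℝ) T := ⟨by linarith [hu'.2], by linarith [hu'.1]⟩
      have hsplit : g u = A u ((X y u - X x u) - Jf (y - x) (projIcc 0 t ht0 u)) +
          ((q y u - q x u) - A u (X y u - X x u)) := by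
        rw [hg]
        simp only [map_sub]
        abel
      have h1 : ‖A u ((X y u - X x u) - Jf (y - x) (projIcc 0 t ht0 u))‖ ≤
          K * ‖(0 : EuclideanSpace ℝ (Fin d)) + ∫ r in (0:ℝ)..u, g r‖ := by
        rw [hFeq u hu', hLapp]
        exact le_trans (ContinuousLinearMap.le_opNorm _ _)
          (mul_le_mul_of_nonneg_right (hAK u) (norm_nonneg _))
      have h2 : ‖(q y u - q x u) - A u (X y u - X x u)‖ ≤ ε := by
        rw [hqe y u hu', hqe x u hu', hAe u hu']
        have htay := taylor_bound (hc2 (t - u) htu) (hM (t - u) htu) (X x u) (X y u)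
        refine le_trans htay ?_
        rw [hε]
        have hfl := hflowlip y u hu'
        have h2' : ‖X y u - X x u‖^2 ≤ (‖y - x‖ * Real.exp (K * T))^2 := by
          apply pow_le_pow_left₀ (norm_nonneg _) hfl
        nlinarith
      calc ‖g u‖ ≤ ‖A u ((X y u - X x u) - Jf (y - x) (projIcc 0 t ht0 u))‖ +
            ‖(q y u - q x u) - A u (X y u - X x u)‖ := by
            rw [hsplit]; exact norm_add_le _ _
        _ ≤ K * ‖(0 : EuclideanSpace ℝ (Fin d)) + ∫ r in (0:ℝ)..u, g r‖ + ε :=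
            add_le_add h1 h2
    have hgr := gronwall_integral hgc 0 hb s hs
    rw [hFeq s hs, norm_zero] at hgr
    have hgb : gronwallBound 0 K ε s ≤ ε * (T * Real.exp (K * T)) :=
      gronwallBound_le' hK0 hε0 hs.1 (le_trans hs.2 htT)
    refine le_trans hgr (le_trans hgb (le_of_eq ?_))
    rw [hε]
    ring
  refine ⟨L, ?_, fun v => (hLcont v).continuousOn, hLeq, hLbound⟩
  intro s hs
  refine HasFDerivAt.of_isLittleO ?_
  have h1 : (fun y => X y s - X x s - L s (y - x)) =O[nhds x]
      (fun y => ‖y - x‖^2) := by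
    apply Asymptotics.isBigO_of_le' (c := M * Real.exp (K * T)^2 * (T * Real.exp (K * T)))
    intro y
    have := hkey s hs y
    rwa [Real.norm_of_nonneg (by positivity : (0:ℝ) ≤ ‖y - x‖^2)]
  exact h1.trans_isLittleO (Asymptotics.isLittleO_pow_sub_sub x one_lt_two)

end AuxiliaryLemmas

set_option maxHeartbeats 1000000 in
/-- Stability of the first derivative of the flow with respect to the
drift: with `R, R'` the flows of `b, b'` (written `𝓡`, `𝔟` in the paper),
`sup_{s∈[0,t]} ‖∂R'^{t,x}_s/∂x_i − ∂R^{t,x}_s/∂x_i‖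
  ≤ T · sup_{s∈[0,t]} ‖D_x b'(t−s, R'^{t,x}_s) − D_x b(t−s, R^{t,x}_s)‖
      · exp(T · (Kb' + Kb))`,
where `Kb, Kb'` bound `‖D_x b‖, ‖D_x b'‖` on `[0,T] × ℝ^d`. -/
theorem stmt_10
    (T : ℝ) (hT : 0 < T) (d : ℕ) (hd : 0 < d)
    (σ : Matrix (Fin d) (Fin d) ℝ)
    (b b' : ℝ → EuclideanSpace ℝ (Fin d) → EuclideanSpace ℝ (Fin d))
    (hb : IsC02 T b) (hb' : IsC02 T b')
    (Kb Kb' Mb Mb' : ℝ)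
    (hKb : ∀ t ∈ Set.Icc (0:ℝ) T, ∀ x, ‖fderiv ℝ (b t) x‖ ≤ Kb)
    (hKb' : ∀ t ∈ Set.Icc (0:ℝ) T, ∀ x, ‖fderiv ℝ (b' t) x‖ ≤ Kb')
    (hMb : ∀ t ∈ Set.Icc (0:ℝ) T, ∀ x, ‖fderiv ℝ (fderiv ℝ (b t)) x‖ ≤ Mb)
    (hMb' : ∀ t ∈ Set.Icc (0:ℝ) T, ∀ x, ‖fderiv ℝ (fderiv ℝ (b' t)) x‖ ≤ Mb')
    (U : ℝ → EuclideanSpace ℝ (Fin d)) (hU : Continuous U)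
    (R R' : ℝ → EuclideanSpace ℝ (Fin d) → ℝ → EuclideanSpace ℝ (Fin d))
    (hRcont : ∀ t ∈ Set.Icc (0:ℝ) T, ∀ x, ContinuousOn (R t x) (Set.Icc 0 t))
    (hR'cont : ∀ t ∈ Set.Icc (0:ℝ) T, ∀ x, ContinuousOn (R' t x) (Set.Icc 0 t))
    (hR : ∀ t ∈ Set.Icc (0:ℝ) T, ∀ x, ∀ s ∈ Set.Icc (0:ℝ) t,
      R t x s = x + (∫ r in (0:ℝ)..s, b (t - r) (R t x r)) +
        Matrix.toEuclideanLin σ (U s))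
    (hR' : ∀ t ∈ Set.Icc (0:ℝ) T, ∀ x, ∀ s ∈ Set.Icc (0:ℝ) t,
      R' t x s = x + (∫ r in (0:ℝ)..s, b' (t - r) (R' t x r)) +
        Matrix.toEuclideanLin σ (U s))
     :
    ∀ i : Fin d, ∀ t ∈ Set.Icc (0:ℝ) T, ∀ x, ∀ s ∈ Set.Icc (0:ℝ) t,
      ‖fderiv ℝ (fun y => R' t y s) x (EuclideanSpace.single i 1) -
          fderiv ℝ (fun y => R t y s) x (EuclideanSpace.single i 1)‖ ≤
        T * (⨆ r : Set.Icc (0:ℝ) t,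
            ‖fderiv ℝ (b' (t - (r:ℝ))) (R' t x (r:ℝ)) -
              fderiv ℝ (b (t - (r:ℝ))) (R t x (r:ℝ))‖) *
          Real.exp (T * (Kb' + Kb)) := by
  intro i t ht x s hs
  obtain ⟨ht0, htT⟩ := ht
  have hKb0 : (0:ℝ) ≤ Kb := le_trans (norm_nonneg _) (hKb t ⟨ht0, htT⟩ x)
  have hKb'0 : (0:ℝ) ≤ Kb' := le_trans (norm_nonneg _) (hKb' t ⟨ht0, htT⟩ x)
  obtain ⟨L, hLd, hLc, hLeq, hLb⟩ := flow_fderiv b hb.1 hb.2.1 hb.2.2.1 hKb hMb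
    (⟨ht0, htT⟩ : t ∈ Set.Icc (0:ℝ) T) x (R t) (fun u => Matrix.toEuclideanLin σ (U u))
    (fun y => hRcont t ⟨ht0, htT⟩ y) (fun y u hu => hR t ⟨ht0, htT⟩ y u hu)
  obtain ⟨L', hLd', hLc', hLeq', hLb'⟩ := flow_fderiv b' hb'.1 hb'.2.1 hb'.2.2.1 hKb' hMb'
    (⟨ht0, htT⟩ : t ∈ Set.Icc (0:ℝ) T) x (R' t) (fun u => Matrix.toEuclideanLin σ (U u))
    (fun y => hR'cont t ⟨ht0, htT⟩ y) (fun y u hu => hR' t ⟨ht0, htT⟩ y u hu)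
  set e : EuclideanSpace ℝ (Fin d) := EuclideanSpace.single i 1 with he
  have hee : ‖e‖ = 1 := by rw [he, EuclideanSpace.norm_single]; norm_num
  rw [(hLd' s hs).fderiv, (hLd s hs).fderiv]
  -- the sup is well defined
  set δ : ℝ := ⨆ r : Set.Icc (0:ℝ) t,
      ‖fderiv ℝ (b' (t - (r:ℝ))) (R' t x (r:ℝ)) -
        fderiv ℝ (b (t - (r:ℝ))) (R t x (r:ℝ))‖ with hδdef
  have htmem : ∀ r ∈ Icc (0:ℝ) t, t - r ∈ Icc (0:ℝ) T := by
    intro r hr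
    exact ⟨by linarith [hr.2], by linarith [hr.1]⟩
  have hbdd : BddAbove (Set.range fun r : Set.Icc (0:ℝ) t =>
      ‖fderiv ℝ (b' (t - (r:ℝ))) (R' t x (r:ℝ)) -
        fderiv ℝ (b (t - (r:ℝ))) (R t x (r:ℝ))‖) := by
    refine ⟨Kb' + Kb, ?_⟩
    rintro z ⟨r, rfl⟩
    exact le_trans (norm_sub_le _ _)
      (add_le_add (hKb' _ (htmem r r.2) _) (hKb _ (htmem r r.2) _))
  have hδ : ∀ r ∈ Icc (0:ℝ) t,
      ‖fderiv ℝ (b' (t - r)) (R' t x r) - fderiv ℝ (b (t - r)) (R t x r)‖ ≤ δ := by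
    intro r hr
    exact le_ciSup hbdd (⟨r, hr⟩ : Set.Icc (0:ℝ) t)
  have hδ0 : (0:ℝ) ≤ δ :=
    le_trans (norm_nonneg _) (hδ 0 ⟨le_rfl, ht0⟩)
  -- extended integrand for the comparison Grönwall argument
  set π : ℝ → ℝ := fun r => (projIcc 0 t ht0 r : ℝ) with hπ
  have hπcont : Continuous π := continuous_subtype_val.comp (continuous_projIcc)
  have hπmem : ∀ r, π r ∈ Icc (0:ℝ) t := fun r => (projIcc 0 t ht0 r).2
  have hπeq : ∀ r ∈ Icc (0:ℝ) t, π r = r := by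
    intro r hr
    simp only [hπ, projIcc_of_mem ht0 hr]
  have hR'e : Continuous (fun r => R' t x (π r)) :=
    (hR'cont t ⟨ht0, htT⟩ x).comp_continuous hπcont hπmem
  have hRe : Continuous (fun r => R t x (π r)) :=
    (hRcont t ⟨ht0, htT⟩ x).comp_continuous hπcont hπmem
  have hA'cont : Continuous (fun r => fderiv ℝ (b' (t - π r)) (R' t x (π r))) := by
    have hmap : ∀ r, ((t - π r, R' t x (π r)) : ℝ × EuclideanSpace ℝ (Fin d)) ∈
        Icc (0:ℝ) T ×ˢ (univ : Set (EuclideanSpace ℝ (Fin d))) :=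
      fun r => ⟨htmem _ (hπmem r), mem_univ _⟩
    exact hb'.2.2.1.comp_continuous
      ((continuous_const.sub hπcont).prodMk hR'e) hmap
  have hAcont : Continuous (fun r => fderiv ℝ (b (t - π r)) (R t x (π r))) := by
    have hmap : ∀ r, ((t - π r, R t x (π r)) : ℝ × EuclideanSpace ℝ (Fin d)) ∈
        Icc (0:ℝ) T ×ˢ (univ : Set (EuclideanSpace ℝ (Fin d))) :=
      fun r => ⟨htmem _ (hπmem r), mem_univ _⟩
    exact hb.2.2.1.comp_continuous
      ((continuous_const.sub hπcont).prodMk hRe) hmap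
  have hL'e : Continuous (fun r => L' (π r) e) :=
    (hLc' e).comp_continuous hπcont hπmem
  have hLe : Continuous (fun r => L (π r) e) :=
    (hLc e).comp_continuous hπcont hπmem
  set g : ℝ → EuclideanSpace ℝ (Fin d) := fun r =>
    (fderiv ℝ (b' (t - π r)) (R' t x (π r))) (L' (π r) e) -
      (fderiv ℝ (b (t - π r)) (R t x (π r))) (L (π r) e) with hg
  have hg1c : Continuous (fun r => (fderiv ℝ (b' (t - π r)) (R' t x (π r))) (L' (π r) e)) :=
    hA'cont.clm_apply hL'e
  have hg2c : Continuous (fun r => (fderiv ℝ (b (t - π r)) (R t x (π r))) (L (π r) e)) :=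
    hAcont.clm_apply hLe
  have hgc : Continuous g := hg1c.sub hg2c
  have hZ : ∀ u ∈ Icc (0:ℝ) t,
      (0 : EuclideanSpace ℝ (Fin d)) + (∫ r in (0:ℝ)..u, g r) = L' u e - L u e := by
    intro u hu
    have hI1 : (∫ r in (0:ℝ)..u, (fderiv ℝ (b' (t - π r)) (R' t x (π r))) (L' (π r) e)) =
        ∫ r in (0:ℝ)..u, (fderiv ℝ (b' (t - r)) (R' t x r)) (L' r e) := by
      apply intervalIntegral.integral_congr
      intro r hr
      rw [uIcc_of_le hu.1] at hr
      have hrt : r ∈ Icc (0:ℝ) t := ⟨hr.1, le_trans hr.2 hu.2⟩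
      simp only [hπeq r hrt]
    have hI2 : (∫ r in (0:ℝ)..u, (fderiv ℝ (b (t - π r)) (R t x (π r))) (L (π r) e)) =
        ∫ r in (0:ℝ)..u, (fderiv ℝ (b (t - r)) (R t x r)) (L r e) := by
      apply intervalIntegral.integral_congr
      intro r hr
      rw [uIcc_of_le hu.1] at hr
      have hrt : r ∈ Icc (0:ℝ) t := ⟨hr.1, le_trans hr.2 hu.2⟩
      simp only [hπeq r hrt]
    have e1 : (∫ r in (0:ℝ)..u, (fderiv ℝ (b' (t - r)) (R' t x r)) (L' r e)) =
        L' u e - e := by rw [hLeq' e u hu]; abel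
    have e2 : (∫ r in (0:ℝ)..u, (fderiv ℝ (b (t - r)) (R t x r)) (L r e)) =
        L u e - e := by rw [hLeq e u hu]; abel
    rw [zero_add, hg, intervalIntegral.integral_sub (hg1c.intervalIntegrable _ _)
      (hg2c.intervalIntegrable _ _), hI1, hI2, e1, e2]
    abel
  have hbound : ∀ u ∈ Ico (0:ℝ) t, ‖g u‖ ≤
      Kb' * ‖(0 : EuclideanSpace ℝ (Fin d)) + ∫ r in (0:ℝ)..u, g r‖ +
        δ * Real.exp (Kb * T) := by
    intro u hu
    have hu' : u ∈ Icc (0:ℝ) t := ⟨hu.1, le_of_lt hu.2⟩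
    have hπu : π u = u := hπeq u hu'
    have hsplit : g u = (fderiv ℝ (b' (t - u)) (R' t x u)) (L' u e - L u e) +
        ((fderiv ℝ (b' (t - u)) (R' t x u)) - (fderiv ℝ (b (t - u)) (R t x u))) (L u e) := by
      rw [hg]
      simp only [hπu, map_sub, ContinuousLinearMap.sub_apply]
      abel
    have h1 : ‖(fderiv ℝ (b' (t - u)) (R' t x u)) (L' u e - L u e)‖ ≤
        Kb' * ‖(0 : EuclideanSpace ℝ (Fin d)) + ∫ r in (0:ℝ)..u, g r‖ := by
      rw [hZ u hu']
      exact le_trans (ContinuousLinearMap.le_opNorm _ _)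
        (mul_le_mul_of_nonneg_right (hKb' _ (htmem u hu') _) (norm_nonneg _))
    have h2 : ‖((fderiv ℝ (b' (t - u)) (R' t x u)) -
        (fderiv ℝ (b (t - u)) (R t x u))) (L u e)‖ ≤ δ * Real.exp (Kb * T) := by
      refine le_trans (ContinuousLinearMap.le_opNorm _ _) ?_
      have hLee : ‖L u e‖ ≤ Real.exp (Kb * T) := by
        have := hLb e u hu'
        rwa [hee, one_mul] at this
      exact mul_le_mul (hδ u hu') hLee (norm_nonneg _) hδ0
    calc ‖g u‖ ≤ ‖(fderiv ℝ (b' (t - u)) (R' t x u)) (L' u e - L u e)‖ +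
          ‖((fderiv ℝ (b' (t - u)) (R' t x u)) -
            (fderiv ℝ (b (t - u)) (R t x u))) (L u e)‖ := by
          rw [hsplit]; exact norm_add_le _ _
      _ ≤ _ := add_le_add h1 h2
  have hgr := gronwall_integral hgc 0 hbound s hs
  rw [hZ s hs, norm_zero] at hgr
  have hgb : gronwallBound 0 Kb' (δ * Real.exp (Kb * T)) s ≤
      (δ * Real.exp (Kb * T)) * (T * Real.exp (Kb' * T)) :=
    gronwallBound_le' hKb'0 (by positivity) hs.1 (le_trans hs.2 htT)
  refine le_trans hgr (le_trans hgb (le_of_eq ?_))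
  calc (δ * Real.exp (Kb * T)) * (T * Real.exp (Kb' * T))
      = T * δ * (Real.exp (Kb * T) * Real.exp (Kb' * T)) := by ring
    _ = T * δ * Real.exp (Kb * T + Kb' * T) := by rw [Real.exp_add]
    _ = T * δ * Real.exp (T * (Kb' + Kb)) := by rw [show Kb * T + Kb' * T = T * (Kb' + Kb) from by ring]
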